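/- Let L be a Lie algebra and {V_i : i ∈ I} a family of L-modules. The direct sum ⊕_{i∈I} V_i is a zero action determined (zad) L-module if and only if each V_i is zad. -/

import Mathlib

open DirectSum

/-- The subspace `L·V` of a Lie module, spanned by all `⁅x, v⁆`. -/
def lieActionSpan (F L V : Type*) [Field F] [LieRing L] [LieAlgebra F L]
    [AddCommGroup V] [Module F V] [LieRingModule L V] : Submodule F V :=
  Submodule.span F {z : V | ∃ (x : L) (v : V), ⁅x, v⁆ = z}

/-- A module `V` over a Lie algebra `L` is zero action determined (zad) if every bilinear
map `f : L × V → F` with `f(x,v) = 0` whenever `x·v = 0` factors through the action via a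
linear map `Φ : L·V → F`. -/
def IsZAD (F L V : Type*) [Field F] [LieRing L] [LieAlgebra F L]
    [AddCommGroup V] [Module F V] [LieRingModule L V] [LieModule F L V] : Prop :=
  ∀ f : L →ₗ[F] V →ₗ[F] F, (∀ (x : L) (v : V), ⁅x, v⁆ = 0 → f x v = 0) →
    ∃ Φ : lieActionSpan F L V →ₗ[F] F,
      ∀ (x : L) (v : V), f x v = Φ ⟨⁅x, v⁆, Submodule.subset_span ⟨x, v, rfl⟩⟩

/-!
Over a field every functional on `L·V` extends to `V`, so `V` is zad iff every admissible `f`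
has the form `f(x, v) = Ψ(x·v)` for a functional `Ψ` on all of `V`. In this form both
directions are formal: a Lie-module retract of a zad module is zad (pull `f` back along the
projection, then restrict the resulting `Ψ` along the inclusion), and each summand is a retract
of the direct sum; conversely the functionals `Ψᵢ` of the summands glue to one on `⨁ Vᵢ`.
-/

theorem DirectSum.lie_lof {R L ι : Type*} {V : ι → Type*} [CommRing R] [LieRing L]
    [DecidableEq ι] [∀ i, AddCommGroup (V i)] [∀ i, Module R (V i)]
    [∀ i, LieRingModule L (V i)] (x : L) (i : ι) (v : V i) :
    ⁅x, lof R ι V i v⁆ = lof R ι V i ⁅x, v⁆ :=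
  ((lieModuleOf R ι L V i).map_lie x v).symm

section

variable {F L : Type*} [Field F] [LieRing L] [LieAlgebra F L]

theorem isZAD_iff_exists_linearMap {V : Type*} [AddCommGroup V] [Module F V]
    [LieRingModule L V] [LieModule F L V] :
    IsZAD F L V ↔ ∀ f : L →ₗ[F] V →ₗ[F] F, (∀ (x : L) (v : V), ⁅x, v⁆ = 0 → f x v = 0) →
      ∃ Ψ : V →ₗ[F] F, ∀ (x : L) (v : V), f x v = Ψ ⁅x, v⁆ := by
  refine ⟨fun h f hf => ?_, fun h f hf => ?_⟩
  · obtain ⟨Φ, hΦ⟩ := h f hf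
    obtain ⟨Ψ, hΨ⟩ := LinearMap.exists_extend Φ
    exact ⟨Ψ, fun x v => by rw [hΦ, ← hΨ]; rfl⟩
  · obtain ⟨Ψ, hΨ⟩ := h f hf
    exact ⟨Ψ ∘ₗ (lieActionSpan F L V).subtype, hΨ⟩

theorem IsZAD.of_retract {V W : Type*} [AddCommGroup V] [Module F V] [LieRingModule L V]
    [LieModule F L V] [AddCommGroup W] [Module F W] [LieRingModule L W] [LieModule F L W]
    (s : W →ₗ⁅F,L⁆ V) (r : V →ₗ⁅F,L⁆ W) (hrs : ∀ w, r (s w) = w) (hV : IsZAD F L V) :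
    IsZAD F L W := by
  rw [isZAD_iff_exists_linearMap] at hV ⊢
  intro f hf
  obtain ⟨Ψ, hΨ⟩ := hV (f.compl₂ (r : V →ₗ[F] W)) fun x v hv =>
    hf x (r v) (by rw [← r.map_lie, hv, map_zero])
  refine ⟨Ψ ∘ₗ s, fun x w => ?_⟩
  calc f x w = f x (r (s w)) := by rw [hrs]
    _ = Ψ ⁅x, s w⁆ := hΨ x (s w)
    _ = Ψ (s ⁅x, w⁆) := by rw [s.map_lie]

variable {ι : Type*} [DecidableEq ι] {V : ι → Type*} [∀ i, AddCommGroup (V i)]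
  [∀ i, Module F (V i)] [∀ i, LieRingModule L (V i)] [∀ i, LieModule F L (V i)]

theorem IsZAD.of_directSum (h : IsZAD F L (⨁ i, V i)) (i : ι) : IsZAD F L (V i) :=
  h.of_retract (lieModuleOf F ι L V i) (lieModuleComponent F ι L V i) fun v => by
    simp [lieModuleOf, lieModuleComponent]

theorem IsZAD.directSum (h : ∀ i, IsZAD F L (V i)) : IsZAD F L (⨁ i, V i) := by
  rw [isZAD_iff_exists_linearMap]
  intro f hf
  have hfi (i : ι) (x : L) (v : V i) (hv : ⁅x, v⁆ = 0) : f.compl₂ (lof F ι V i) x v = 0 :=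
    hf x _ (by rw [lie_lof, hv, map_zero])
  choose Ψ hΨ using fun i => isZAD_iff_exists_linearMap.1 (h i) _ (hfi i)
  refine ⟨toModule F ι F Ψ, fun x => LinearMap.congr_fun
    (?_ : f x = toModule F ι F Ψ ∘ₗ LieModule.toEnd F L _ x)⟩
  refine linearMap_ext F fun i => LinearMap.ext fun v => ?_
  simp [lie_lof, ← hΨ]

end

theorem isZAD_directSum_iff_general (F L : Type*) (ι : Type*) (V : ι → Type*)
    [Field F] [LieRing L] [LieAlgebra F L]
    [∀ i, AddCommGroup (V i)] [∀ i, Module F (V i)]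
    [∀ i, LieRingModule L (V i)] [∀ i, LieModule F L (V i)] :
    IsZAD F L (⨁ i, V i) ↔ ∀ i, IsZAD F L (V i) := by
  classical
  exact ⟨IsZAD.of_directSum, IsZAD.directSum⟩

/-- a direct sum of Lie modules is zero action determined if and only if every
summand is. -/
theorem isZAD_directSum_iff (F L : Type*) (ι : Type*) (V : ι → Type*)
    [Field F] [LieRing L] [LieAlgebra F L] [DecidableEq ι]
    [∀ i, AddCommGroup (V i)] [∀ i, Module F (V i)]
    [∀ i, LieRingModule L (V i)] [∀ i, LieModule F L (V i)] :
    IsZAD F L (⨁ i, V i) ↔ ∀ i, IsZAD F L (V i) :=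
  isZAD_directSum_iff_general F L ι V
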